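/- Let S = (P, B) be a Steiner triple system on 27 points admitting a (3,2)-decomposition, i.e. a partition of P into three groups G_0, G_1, G_2 of size 9 such that the blocks contained in each G_i form a Steiner triple system on G_i, every other block meets all three groups, and every pair of points from two different groups lies in exactly one block meeting all three groups (so these cross blocks form a transversal design TD[3;9] given by a Latin square of order 9). If that Latin square of order 9 has an orthogonal mate, then S is resolvable; its block set is partitioned into 13 parallel classes. -/

import Mathlib

/-!
A Steiner triple system on 9 points is the affine plane of order 3: a point off a block lies on
four blocks, three of which meet the block, so exactly one block through it misses the block.
Hence "equal or disjoint" is an equivalence relation on blocks whose classes are parallel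
classes, and there are `12 / 3 = 4` of them. Taking, for each `k`, the union of the `k`-th
classes of the three groups gives 4 parallel classes of the whole system.

The remaining blocks are the triples `{x₀ i, x₁ j, x₂ (L i j)}`. For every value `m` of an
orthogonal mate `M` the cells with `M i j = m` form a transversal of `L`, so their 9 blocks
form a parallel class, giving `4 + 9 = 13` classes.
-/

/-- A Steiner triple system on the point type `P`: a collection of 3-element
subsets (blocks) such that every pair of distinct points lies in exactly one block. -/
def IsSTS {P : Type*} [DecidableEq P] (B : Finset (Finset P)) : Prop :=
  (∀ b ∈ B, b.card = 3) ∧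
  ∀ p q : P, p ≠ q → ∃! b, b ∈ B ∧ p ∈ b ∧ q ∈ b

/-- A Steiner triple system on the point set `s ⊆ P`. -/
def IsSTSOn {P : Type*} [DecidableEq P] (s : Finset P) (B : Finset (Finset P)) : Prop :=
  (∀ b ∈ B, b ⊆ s ∧ b.card = 3) ∧
  ∀ p ∈ s, ∀ q ∈ s, p ≠ q → ∃! b, b ∈ B ∧ p ∈ b ∧ q ∈ b

/-- A parallel class: a collection of pairwise disjoint subsets whose union is everything. -/
def IsParallelClass {P : Type*} [Fintype P] [DecidableEq P] (C : Finset (Finset P)) : Prop :=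
  (∀ b ∈ C, ∀ b' ∈ C, b ≠ b' → Disjoint b b') ∧ C.biUnion id = Finset.univ

/-- A block collection is resolvable if it can be partitioned into parallel classes. -/
def IsResolvable {P : Type*} [Fintype P] [DecidableEq P] (B : Finset (Finset P)) : Prop :=
  ∃ F : Finpartition B, ∀ C ∈ F.parts, IsParallelClass C

/-- A Latin square of order `n`: each row and each column is a bijection. -/
def IsLatinSquare {n : ℕ} (L : Fin n → Fin n → Fin n) : Prop :=
  (∀ i, Function.Bijective fun j => L i j) ∧ (∀ j, Function.Bijective fun i => L i j)

/-- Two Latin squares are orthogonal if superimposing them yields all ordered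
pairs without repetition. -/
def AreOrthogonal {n : ℕ} (L M : Fin n → Fin n → Fin n) : Prop :=
  Function.Injective fun p : Fin n × Fin n => (L p.1 p.2, M p.1 p.2)

open Finset Function

section ParallelClass

variable {P : Type*}

def IsParallelClassOn (s : Finset P) (C : Finset (Finset P)) : Prop :=
  (∀ b ∈ C, b ⊆ s) ∧ ∀ p ∈ s, ∃! b, b ∈ C ∧ p ∈ b

variable {s : Finset P} {C C' : Finset (Finset P)}

theorem IsParallelClassOn.disjoint (hC : IsParallelClassOn s C) {b b' : Finset P} (hb : b ∈ C)
    (hb' : b' ∈ C) (hne : b ≠ b') : Disjoint b b' :=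
  disjoint_left.2 fun p hpb hpb' =>
    hne ((hC.2 p (hC.1 b hb hpb)).unique ⟨hb, hpb⟩ ⟨hb', hpb'⟩)

theorem IsParallelClassOn.eq_of_subset (hC : IsParallelClassOn s C)
    (hC' : IsParallelClassOn s C') (hsub : C ⊆ C') (hne : ∀ b ∈ C', b.Nonempty) : C = C' := by
  refine hsub.antisymm fun b hb => ?_
  obtain ⟨p, hp⟩ := hne b hb
  obtain ⟨c, ⟨hc, hpc⟩, -⟩ := hC.2 p (hC'.1 b hb hp)
  rwa [(hC'.2 p (hC'.1 b hb hp)).unique ⟨hb, hp⟩ ⟨hsub hc, hpc⟩]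

variable [DecidableEq P]

theorem IsParallelClassOn.biUnion_id (hC : IsParallelClassOn s C) : C.biUnion id = s := by
  ext p
  simp only [mem_biUnion, id]
  exact ⟨fun ⟨b, hb, hp⟩ => hC.1 b hb hp, fun hp => (hC.2 p hp).exists⟩

theorem IsParallelClassOn.sum_card (hC : IsParallelClassOn s C) : ∑ b ∈ C, b.card = s.card := by
  rw [← hC.biUnion_id, card_biUnion (t := id) fun b hb b' hb' hne => hC.disjoint hb hb' hne]
  rfl

theorem IsParallelClassOn.biUnion {ι : Type*} [Fintype ι] {G : ι → Finset P}
    {D : ι → Finset (Finset P)} (hG : Pairwise (Disjoint on G))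
    (hD : ∀ i, IsParallelClassOn (G i) (D i)) :
    IsParallelClassOn (univ.biUnion G) (univ.biUnion D) := by
  refine ⟨fun b hb => ?_, fun p hp => ?_⟩
  · obtain ⟨i, -, hbi⟩ := mem_biUnion.1 hb
    exact ((hD i).1 b hbi).trans (subset_biUnion_of_mem G (mem_univ i))
  · obtain ⟨i, -, hpi⟩ := mem_biUnion.1 hp
    obtain ⟨b, ⟨hb, hpb⟩, hb_unique⟩ := (hD i).2 p hpi
    refine ⟨b, ⟨mem_biUnion.2 ⟨i, mem_univ i, hb⟩, hpb⟩, fun b' ⟨hb', hpb'⟩ => ?_⟩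
    obtain ⟨j, -, hb'j⟩ := mem_biUnion.1 hb'
    obtain rfl : j = i := by
      by_contra hji
      exact disjoint_left.1 (hG hji) ((hD j).1 b' hb'j hpb') hpi
    exact hb_unique b' ⟨hb'j, hpb'⟩

theorem isParallelClass_iff [Fintype P] :
    IsParallelClass C ↔ IsParallelClassOn univ C := by
  refine ⟨fun hC => ⟨fun b _ => subset_univ b, fun p _ => ?_⟩,
    fun hC => ⟨fun b hb b' hb' => hC.disjoint hb hb', hC.biUnion_id⟩⟩
  obtain ⟨b, hb, hpb⟩ := mem_biUnion.1 (hC.2 ▸ mem_univ p)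
  exact ⟨b, ⟨hb, hpb⟩, fun b' ⟨hb', hpb'⟩ => by_contra fun hne =>
    disjoint_left.1 (hC.1 b' hb' b hb hne) hpb' hpb⟩

end ParallelClass

section Resolution

variable {P ι κ : Type*} [DecidableEq P] [Fintype ι] [Fintype κ]

structure IsResolutionOn (s : Finset P) (B : Finset (Finset P)) (D : ι → Finset (Finset P)) :
    Prop where
  isParallelClassOn : ∀ i, IsParallelClassOn s (D i)
  pairwise_disjoint : Pairwise (Disjoint on D)
  biUnion_eq : univ.biUnion D = B

variable {s : Finset P} {B : Finset (Finset P)} {D : ι → Finset (Finset P)}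

namespace IsResolutionOn

theorem subset (hD : IsResolutionOn s B D) (i : ι) : D i ⊆ B :=
  hD.biUnion_eq ▸ subset_biUnion_of_mem D (mem_univ i)

theorem card_mul (hD : IsResolutionOn s B D) (hB : ∀ b ∈ B, b.card = 3) :
    Fintype.card ι * s.card = 3 * B.card := by
  have hclass : ∀ i, s.card = 3 * (D i).card := fun i => by
    rw [← (hD.isParallelClassOn i).sum_card, sum_const_nat fun b hb => hB b (hD.subset i hb),
      mul_comm]
  rw [← hD.biUnion_eq, card_biUnion fun i _ j _ hij => hD.pairwise_disjoint hij, mul_sum,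
    ← sum_congr rfl fun i _ => hclass i, sum_const, card_univ, smul_eq_mul]

theorem comp_equiv (hD : IsResolutionOn s B D) (e : κ ≃ ι) : IsResolutionOn s B (D ∘ e) where
  isParallelClassOn k := hD.isParallelClassOn (e k)
  pairwise_disjoint := hD.pairwise_disjoint.comp_of_injective e.injective
  biUnion_eq := by
    rw [← hD.biUnion_eq]
    ext b
    simp only [mem_biUnion, mem_univ, true_and, comp_apply, e.exists_congr_left]
    simp

theorem sum_elim {B' : Finset (Finset P)} {E : κ → Finset (Finset P)} (hD : IsResolutionOn s B D)
    (hE : IsResolutionOn s B' E) (hBB' : Disjoint B B') :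
    IsResolutionOn s (B ∪ B') (Sum.elim D E) where
  isParallelClassOn := Sum.rec hD.isParallelClassOn hE.isParallelClassOn
  pairwise_disjoint := by
    rintro (i | i) (j | j) hij
    · exact hD.pairwise_disjoint fun h => hij (congrArg Sum.inl h)
    · exact hBB'.mono (hD.subset i) (hE.subset j)
    · exact hBB'.symm.mono (hE.subset i) (hD.subset j)
    · exact hE.pairwise_disjoint fun h => hij (congrArg Sum.inr h)
  biUnion_eq := by
    rw [← hD.biUnion_eq, ← hE.biUnion_eq]
    ext b
    simp

theorem biUnion {G : κ → Finset P} {B : κ → Finset (Finset P)} {D : κ → ι → Finset (Finset P)}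
    (hG : Pairwise (Disjoint on G)) (hB : Pairwise (Disjoint on B))
    (hD : ∀ k, IsResolutionOn (G k) (B k) (D k)) :
    IsResolutionOn (univ.biUnion G) (univ.biUnion B) fun i => univ.biUnion fun k => D k i where
  isParallelClassOn i := IsParallelClassOn.biUnion hG fun k => (hD k).isParallelClassOn i
  pairwise_disjoint i j hij := by
    simp only [onFun, disjoint_biUnion_left, disjoint_biUnion_right]
    intro k _ l _
    obtain rfl | hlk := eq_or_ne l k
    · exact (hD l).pairwise_disjoint hij
    · exact (hB hlk).mono ((hD l).subset i) ((hD k).subset j)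
  biUnion_eq := by
    ext b
    simp only [mem_biUnion, mem_univ, true_and, ← (hD _).biUnion_eq]
    exact exists_comm

theorem exists_finpartition [Fintype P] [Nonempty P] (hD : IsResolutionOn univ B D) :
    ∃ F : Finpartition B, F.parts.card = Fintype.card ι ∧ ∀ C ∈ F.parts, IsParallelClass C := by
  have hne : ∀ i, D i ≠ ∅ := fun i hi => by
    obtain ⟨b, ⟨hb, -⟩, -⟩ := (hD.isParallelClassOn i).2 (Classical.arbitrary P) (mem_univ _)
    simp [hi] at hb
  have hinj : Injective D := fun i j hij => by
    by_contra h
    have hdisj := hD.pairwise_disjoint h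
    rw [onFun, hij, disjoint_self] at hdisj
    exact hne j hdisj
  refine ⟨⟨univ.image D, ?_, ?_, ?_⟩, ?_, ?_⟩
  · rw [supIndep_iff_pairwiseDisjoint]
    rintro _ hC _ hC' hCC'
    obtain ⟨i, -, rfl⟩ := mem_image.1 hC
    obtain ⟨j, -, rfl⟩ := mem_image.1 hC'
    exact hD.pairwise_disjoint fun h => hCC' (congrArg D h)
  · rw [sup_image, ← hD.biUnion_eq, sup_eq_biUnion]
    rfl
  · simp only [mem_image, mem_univ, true_and, not_exists]
    exact hne
  · exact (card_image_of_injective _ hinj).trans card_univ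
  · simp only [mem_image, mem_univ, true_and, forall_exists_index, forall_apply_eq_imp_iff]
    exact fun i => isParallelClass_iff.2 (hD.isParallelClassOn i)

end IsResolutionOn

end Resolution

namespace IsSTSOn

variable {P : Type*} [DecidableEq P] {s : Finset P} {Bs : Finset (Finset P)}

theorem eq_of_mem_of_mem (h : IsSTSOn s Bs) {b c : Finset P} {p q : P} (hb : b ∈ Bs)
    (hc : c ∈ Bs) (hpq : p ≠ q) (hpb : p ∈ b) (hqb : q ∈ b) (hpc : p ∈ c) (hqc : q ∈ c) :
    b = c :=
  (h.2 p ((h.1 b hb).1 hpb) q ((h.1 b hb).1 hqb) hpq).unique ⟨hb, hpb, hqb⟩ ⟨hc, hpc, hqc⟩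

theorem card_inter_le_one (h : IsSTSOn s Bs) {b c : Finset P} (hb : b ∈ Bs) (hc : c ∈ Bs)
    (hbc : b ≠ c) : (b ∩ c).card ≤ 1 := by
  refine card_le_one.2 fun p hp q hq => by_contra fun hpq => hbc ?_
  rw [mem_inter] at hp hq
  exact h.eq_of_mem_of_mem hb hc hpq hp.1 hq.1 hp.2 hq.2

theorem sum_card_inter (h : IsSTSOn s Bs) {x : P} {t : Finset P} (hx : x ∈ s) (ht : t ⊆ s)
    (hxt : x ∉ t) : ∑ d ∈ Bs with x ∈ d, (d ∩ t).card = t.card := by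
  have hcover : (Bs.filter (x ∈ ·)).biUnion (· ∩ t) = t := by
    refine (biUnion_subset.2 fun d _ => inter_subset_right).antisymm fun y hy => ?_
    obtain ⟨d, ⟨hd, hxd, hyd⟩, -⟩ := h.2 x hx y (ht hy) (ne_of_mem_of_not_mem hy hxt).symm
    exact mem_biUnion.2 ⟨d, mem_filter.2 ⟨hd, hxd⟩, mem_inter.2 ⟨hyd, hy⟩⟩
  rw [← card_biUnion, hcover]
  intro d hd d' hd' hne
  rw [mem_coe, mem_filter] at hd hd'
  refine disjoint_left.2 fun y hy hy' => hne ?_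
  rw [mem_inter] at hy hy'
  exact h.eq_of_mem_of_mem hd.1 hd'.1 (ne_of_mem_of_not_mem hy.2 hxt).symm hd.2 hy.1 hd'.2 hy'.1

theorem two_mul_card_filter_mem (h : IsSTSOn s Bs) {x : P} (hx : x ∈ s) :
    2 * #{d ∈ Bs | x ∈ d} = s.card - 1 := by
  have hpiece : ∀ d ∈ Bs.filter (x ∈ ·), (d ∩ s.erase x).card = 2 := fun d hd => by
    rw [mem_filter] at hd
    rw [inter_erase, inter_eq_left.2 (h.1 d hd.1).1, card_erase_of_mem hd.2, (h.1 d hd.1).2]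
  rw [← card_erase_of_mem hx, ← h.sum_card_inter hx (erase_subset x s) (notMem_erase x s),
    sum_congr rfl hpiece, sum_const, smul_eq_mul, mul_comm]

theorem six_mul_card (h : IsSTSOn s Bs) : 6 * Bs.card = s.card * (s.card - 1) := by
  have hr : ∀ x ∈ s, #{d ∈ Bs | x ∈ d} = (s.card - 1) / 2 := fun x hx => by
    have := h.two_mul_card_filter_mem hx
    omega
  have hdouble := Finset.sum_card_inter hr
  rw [sum_congr rfl fun b hb => by rw [inter_eq_right.2 (h.1 b hb).1, (h.1 b hb).2],
    sum_const, smul_eq_mul] at hdouble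
  have hodd : s.card - 1 = 2 * ((s.card - 1) / 2) := by
    obtain rfl | ⟨x, hx⟩ := s.eq_empty_or_nonempty
    · simp
    · have := h.two_mul_card_filter_mem hx
      omega
  calc 6 * Bs.card = 2 * (Bs.card * 3) := by ring
    _ = s.card * (2 * ((s.card - 1) / 2)) := by rw [hdouble]; ring
    _ = s.card * (s.card - 1) := by rw [← hodd]

theorem two_mul_card_filter_disjoint_add_seven (h : IsSTSOn s Bs) {b : Finset P} {x : P}
    (hb : b ∈ Bs) (hx : x ∈ s) (hxb : x ∉ b) :
    2 * #{d ∈ Bs | x ∈ d ∧ Disjoint d b} + 7 = s.card := by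
  -- each block through `x` contributes at most one point of `b` to `sum_card_inter`
  have hmeet : #{d ∈ Bs.filter (x ∈ ·) | ¬Disjoint d b} = 3 := by
    rw [card_filter, ← (h.1 b hb).2, ← h.sum_card_inter hx (h.1 b hb).1 hxb]
    refine sum_congr rfl fun d hd => ?_
    rw [mem_filter] at hd
    have hle := h.card_inter_le_one hd.1 hb (ne_of_mem_of_not_mem' hd.2 hxb)
    split_ifs with hdb
    · rw [disjoint_iff_inter_eq_empty.1 hdb, card_empty]
    · have := (not_disjoint_iff_nonempty_inter.1 hdb).card_pos
      omega
  have hsplit := card_filter_add_card_filter_not (s := Bs.filter (x ∈ ·)) (Disjoint · b)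
  rw [filter_filter, hmeet] at hsplit
  have hr := h.two_mul_card_filter_mem hx
  omega

theorem existsUnique_disjoint (h : IsSTSOn s Bs) (hs : s.card = 9) {b : Finset P} {x : P}
    (hb : b ∈ Bs) (hx : x ∈ s) (hxb : x ∉ b) : ∃! d, d ∈ Bs ∧ x ∈ d ∧ Disjoint d b := by
  have hone := h.two_mul_card_filter_disjoint_add_seven hb hx hxb
  obtain ⟨d, hd⟩ := card_eq_one.1 (show #{d ∈ Bs | x ∈ d ∧ Disjoint d b} = 1 by omega)
  rw [eq_singleton_iff_unique_mem, mem_filter] at hd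
  exact ⟨d, hd.1, fun d' hd' => hd.2 d' (mem_filter.2 hd')⟩

end IsSTSOn

section NinePoints

variable {P : Type*} [DecidableEq P] {s : Finset P} {Bs : Finset (Finset P)}

def parallelClass (Bs : Finset (Finset P)) (b : Finset P) : Finset (Finset P) :=
  {d ∈ Bs | d = b ∨ Disjoint d b}

namespace IsSTSOn

theorem isParallelClassOn_parallelClass (h : IsSTSOn s Bs) (hs : s.card = 9) {b : Finset P}
    (hb : b ∈ Bs) : IsParallelClassOn s (parallelClass Bs b) := by
  refine ⟨fun d hd => (h.1 d (mem_filter.1 hd).1).1, fun p hp => ?_⟩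
  by_cases hpb : p ∈ b
  · refine ⟨b, ⟨mem_filter.2 ⟨hb, Or.inl rfl⟩, hpb⟩, fun d ⟨hd, hpd⟩ => ?_⟩
    obtain ⟨-, rfl | hdb⟩ := mem_filter.1 hd
    · rfl
    · exact absurd hpb (disjoint_left.1 hdb hpd)
  · obtain ⟨d, ⟨hd, hpd, hdb⟩, hunique⟩ := h.existsUnique_disjoint hs hb hp hpb
    refine ⟨d, ⟨mem_filter.2 ⟨hd, Or.inr hdb⟩, hpd⟩, fun d' ⟨hd', hpd'⟩ => ?_⟩
    obtain ⟨hd'B, rfl | hd'b⟩ := mem_filter.1 hd'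
    · exact absurd hpd' hpb
    · exact hunique d' ⟨hd'B, hpd', hd'b⟩

theorem parallelClass_eq_of_mem (h : IsSTSOn s Bs) (hs : s.card = 9) {b c : Finset P}
    (hb : b ∈ Bs) (hc : c ∈ parallelClass Bs b) : parallelClass Bs c = parallelClass Bs b := by
  have hcB : c ∈ Bs := (mem_filter.1 hc).1
  have hsub : parallelClass Bs b ⊆ parallelClass Bs c := fun d hd => by
    refine mem_filter.2 ⟨(mem_filter.1 hd).1, ?_⟩
    obtain rfl | hdc := eq_or_ne d c
    · exact Or.inl rfl
    · exact Or.inr ((h.isParallelClassOn_parallelClass hs hb).disjoint hd hc hdc)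
  refine ((h.isParallelClassOn_parallelClass hs hb).eq_of_subset
    (h.isParallelClassOn_parallelClass hs hcB) hsub fun d hd => ?_).symm
  rw [← card_pos, (h.1 d (mem_filter.1 hd).1).2]
  norm_num

theorem isResolutionOn_parallelClass (h : IsSTSOn s Bs) (hs : s.card = 9) :
    IsResolutionOn s Bs fun C : Bs.image (parallelClass Bs) => (C : Finset (Finset P)) where
  isParallelClassOn := fun ⟨C, hC⟩ => by
    obtain ⟨b, hb, rfl⟩ := mem_image.1 hC
    exact h.isParallelClassOn_parallelClass hs hb
  pairwise_disjoint := fun ⟨C, hC⟩ ⟨C', hC'⟩ hne => by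
    obtain ⟨b, hb, rfl⟩ := mem_image.1 hC
    obtain ⟨b', hb', rfl⟩ := mem_image.1 hC'
    refine disjoint_left.2 fun d hd hd' => hne (Subtype.ext ?_)
    exact (h.parallelClass_eq_of_mem hs hb hd).symm.trans (h.parallelClass_eq_of_mem hs hb' hd')
  biUnion_eq := by
    ext d
    simp only [mem_biUnion, mem_univ, true_and, Subtype.exists, mem_image, exists_prop]
    refine ⟨fun ⟨C, ⟨b, _, hC⟩, hd⟩ => (mem_filter.1 (hC ▸ hd)).1, fun hd => ?_⟩
    exact ⟨_, ⟨d, hd, rfl⟩, mem_filter.2 ⟨hd, Or.inl rfl⟩⟩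

theorem exists_isResolutionOn_fin_four (h : IsSTSOn s Bs) (hs : s.card = 9) :
    ∃ D : Fin 4 → Finset (Finset P), IsResolutionOn s Bs D := by
  have hR := h.isResolutionOn_parallelClass hs
  have hcard := hR.card_mul fun b hb => (h.1 b hb).2
  have hBs := h.six_mul_card
  rw [hs] at hcard hBs
  exact ⟨_, hR.comp_equiv (Fintype.equivFinOfCardEq (by omega)).symm⟩

end IsSTSOn

end NinePoints

section LatinSquare

variable {n : ℕ} {L M : Fin n → Fin n → Fin n}

def cellCoord (L : Fin n → Fin n → Fin n) (c : Fin n × Fin n) : ZMod 3 → Fin n :=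
  ![c.1, c.2, L c.1 c.2]

theorem cellCoord_injective : Injective (cellCoord L) := fun _ _ h =>
  Prod.ext (congrFun h 0) (congrFun h 1)

/-- The cells on which an orthogonal mate of `L` takes a given value form a transversal of `L`. -/
theorem AreOrthogonal.existsUnique_cellCoord (hM : IsLatinSquare M) (hLM : AreOrthogonal L M)
    (m : Fin n) (k : ZMod 3) (t : Fin n) :
    ∃! c : Fin n × Fin n, M c.1 c.2 = m ∧ cellCoord L c k = t := by
  fin_cases k
  · obtain ⟨j, hj, hj_unique⟩ := (hM.1 t).existsUnique m
    refine ⟨(t, j), ⟨hj, rfl⟩, ?_⟩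
    rintro ⟨i', j'⟩ ⟨hm, rfl : i' = t⟩
    rw [hj_unique j' hm]
  · obtain ⟨i, hi, hi_unique⟩ := (hM.2 t).existsUnique m
    refine ⟨(i, t), ⟨hi, rfl⟩, ?_⟩
    rintro ⟨i', j'⟩ ⟨hm, rfl : j' = t⟩
    rw [hi_unique i' hm]
  · obtain ⟨c, hc, hc_unique⟩ := (Finite.injective_iff_bijective.1 hLM).existsUnique (t, m)
    exact ⟨c, ⟨congrArg Prod.snd hc, congrArg Prod.fst hc⟩,
      fun c' ⟨hm, ht⟩ => hc_unique c' (Prod.ext ht hm)⟩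

end LatinSquare

section TransversalDesign

/- The points are coordinatised as `x k t`, the `t`-th point of the `k`-th group, and the cross
block of a cell `c` of `L` is `triple x (cellCoord L c)`. -/

variable {P : Type*} [DecidableEq P] {n : ℕ} {x : ZMod 3 → Fin n → P}

def triple (x : ZMod 3 → Fin n → P) (v : ZMod 3 → Fin n) : Finset P :=
  univ.image fun k => x k (v k)

theorem triple_eq (x : ZMod 3 → Fin n → P) (v : ZMod 3 → Fin n) :
    triple x v = {x 0 (v 0), x 1 (v 1), x 2 (v 2)} := by
  unfold triple
  rw [show (univ : Finset (ZMod 3)) = {0, 1, 2} from by decide]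
  simp only [image_insert, image_singleton]

theorem mem_triple (hx : Injective (uncurry x)) {v : ZMod 3 → Fin n} {k : ZMod 3} {t : Fin n} :
    x k t ∈ triple x v ↔ v k = t := by
  simp only [triple, mem_image, mem_univ, true_and]
  refine ⟨fun ⟨k', h⟩ => ?_, fun h => ⟨k, h ▸ rfl⟩⟩
  obtain ⟨rfl, h⟩ := Prod.ext_iff.1 (@hx (k', v k') (k, t) h)
  exact h

theorem card_triple (hx : Injective (uncurry x)) (v : ZMod 3 → Fin n) : (triple x v).card = 3 :=
  card_image_of_injective _ fun k k' h => congrArg Prod.fst (@hx (k, v k) (k', v k') h)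

theorem triple_injective (hx : Injective (uncurry x)) : Injective (triple x) := fun _ _ h =>
  funext fun _ => (mem_triple hx).1 (h ▸ (mem_triple hx).2 rfl)

def crossClass (x : ZMod 3 → Fin n → P) (L M : Fin n → Fin n → Fin n) (m : Fin n) :
    Finset (Finset P) :=
  (univ.filter fun c : Fin n × Fin n => M c.1 c.2 = m).image fun c => triple x (cellCoord L c)

theorem isResolutionOn_crossClass [Fintype P] {L M : Fin n → Fin n → Fin n}
    (hx : Bijective (uncurry x)) (hM : IsLatinSquare M) (hLM : AreOrthogonal L M) :
    IsResolutionOn univ (univ.image fun c => triple x (cellCoord L c)) (crossClass x L M) where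
  isParallelClassOn m := by
    refine ⟨fun _ _ => subset_univ _, fun p _ => ?_⟩
    obtain ⟨⟨k, t⟩, rfl⟩ := hx.2 p
    obtain ⟨c, ⟨hcm, hct⟩, hc_unique⟩ := hLM.existsUnique_cellCoord hM m k t
    refine ⟨_, ⟨mem_image_of_mem _ (mem_filter.2 ⟨mem_univ c, hcm⟩), (mem_triple hx.1).2 hct⟩, ?_⟩
    rintro _ ⟨hb, hpb⟩
    obtain ⟨c', hc', rfl⟩ := mem_image.1 hb
    rw [hc_unique c' ⟨(mem_filter.1 hc').2, (mem_triple hx.1).1 hpb⟩]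
  pairwise_disjoint m m' hmm' := by
    refine disjoint_left.2 fun b hb hb' => hmm' ?_
    obtain ⟨c, hc, rfl⟩ := mem_image.1 hb
    obtain ⟨c', hc', hcc'⟩ := mem_image.1 hb'
    obtain rfl := cellCoord_injective (triple_injective hx.1 hcc')
    exact (mem_filter.1 hc).2.symm.trans (mem_filter.1 hc').2
  biUnion_eq := by
    ext b
    simp [crossClass]

end TransversalDesign

section Groups

variable {P ι : Type*} [DecidableEq P] [Fintype ι] {G : ι → Finset P}

theorem bijective_uncurry_of_partition [Fintype P] {α : Type*} (hG : Pairwise (Disjoint on G))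
    (hcover : univ.biUnion G = univ) (φ : ∀ i, {p // p ∈ G i} ≃ α) :
    Bijective (uncurry fun i a => ((φ i).symm a : P)) := by
  refine ⟨fun ⟨i, a⟩ ⟨j, b⟩ h => ?_, fun p => ?_⟩
  · simp only [uncurry_apply_pair] at h
    obtain rfl : i = j := by
      by_contra hij
      exact disjoint_left.1 (hG hij) ((φ i).symm a).2 (h ▸ ((φ j).symm b).2)
    rw [(φ i).symm.injective (Subtype.ext h)]
  · obtain ⟨i, -, hp⟩ := mem_biUnion.1 (hcover ▸ mem_univ p)
    exact ⟨(i, φ i ⟨p, hp⟩), by simp⟩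

theorem exists_isResolutionOn_filter_subset {B : Finset (Finset P)}
    (hG : Pairwise (Disjoint on G)) (hB : ∀ b ∈ B, b.card = 3)
    (hSub : ∀ k, IsSTSOn (G k) (B.filter (· ⊆ G k))) (hGcard : ∀ k, (G k).card = 9) :
    ∃ D : Fin 4 → Finset (Finset P),
      IsResolutionOn (univ.biUnion G) (B.filter fun b => ∃ k, b ⊆ G k) D := by
  choose D hD using fun k => (hSub k).exists_isResolutionOn_fin_four (hGcard k)
  have hdisj : Pairwise (Disjoint on fun k => B.filter (· ⊆ G k)) := fun k l hkl =>
    disjoint_left.2 fun b hbk hbl => by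
      rw [mem_filter] at hbk hbl
      have hbb := (hG hkl).mono hbk.2 hbl.2
      rw [disjoint_self, bot_eq_empty] at hbb
      simpa [hbb] using hB b hbk.1
  have hunion : univ.biUnion (fun k => B.filter (· ⊆ G k)) = B.filter fun b => ∃ k, b ⊆ G k := by
    ext b
    simp only [mem_biUnion, mem_univ, true_and, mem_filter]
    exact ⟨fun ⟨k, hb, hk⟩ => ⟨hb, k, hk⟩, fun ⟨hb, k, hk⟩ => ⟨k, hb, hk⟩⟩
  exact ⟨_, hunion ▸ IsResolutionOn.biUnion hG hdisj hD⟩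

end Groups

section Decomposition

variable {P : Type*} {n : ℕ} {G : ZMod 3 → Finset P} {x : ZMod 3 → Fin n → P}

theorem group_index_eq_of_mem (hx : Injective (uncurry x)) (hGx : ∀ k p, p ∈ G k ↔ ∃ t, x k t = p)
    {k k' : ZMod 3} {t : Fin n} (h : x k t ∈ G k') : k' = k := by
  obtain ⟨t', ht'⟩ := (hGx k' _).1 h
  exact congrArg Prod.fst (@hx (k', t') (k, t) ht')

theorem not_subset_group_of_mem (hx : Injective (uncurry x))
    (hGx : ∀ k p, p ∈ G k ↔ ∃ t, x k t = p) {b : Finset P} {i j : Fin n} (hi : x 0 i ∈ b)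
    (hj : x 1 j ∈ b) (k : ZMod 3) : ¬b ⊆ G k := fun h =>
  (by decide : (0 : ZMod 3) ≠ 1)
    ((group_index_eq_of_mem hx hGx (h hi)).symm.trans (group_index_eq_of_mem hx hGx (h hj)))

variable [DecidableEq P] {B : Finset (Finset P)}

theorem exists_eq_triple (hx : Injective (uncurry x)) (hGx : ∀ k p, p ∈ G k ↔ ∃ t, x k t = p)
    {b : Finset P} (hb : b.card = 3) (hmeet : ∀ k, (b ∩ G k).Nonempty) : ∃ v, b = triple x v := by
  have hpoint : ∀ k, ∃ t, x k t ∈ b := fun k => by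
    obtain ⟨p, hp⟩ := hmeet k
    rw [mem_inter] at hp
    obtain ⟨t, rfl⟩ := (hGx k p).1 hp.2
    exact ⟨t, hp.1⟩
  choose v hv using hpoint
  refine ⟨v, (eq_of_subset_of_card_le (image_subset_iff.2 fun k _ => hv k) ?_).symm⟩
  rw [hb]
  exact (card_triple hx v).ge

theorem existsUnique_symbol (hx : Injective (uncurry x))
    (hGx : ∀ k p, p ∈ G k ↔ ∃ t, x k t = p) (hB : IsSTS B)
    (hCross : ∀ b ∈ B, (¬∃ k, b ⊆ G k) → ∀ k, (b ∩ G k).Nonempty) (i j : Fin n) :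
    ∃! m, ({x 0 i, x 1 j, x 2 m} : Finset P) ∈ B := by
  have hij : x 0 i ≠ x 1 j := fun h =>
    (by decide : (0 : ZMod 3) ≠ 1) (congrArg Prod.fst (@hx (0, i) (1, j) h))
  obtain ⟨b, ⟨hb, hib, hjb⟩, hb_unique⟩ := hB.2 _ _ hij
  have hnot : ¬∃ k, b ⊆ G k := fun ⟨k, hk⟩ => not_subset_group_of_mem hx hGx hib hjb k hk
  obtain ⟨v, rfl⟩ := exists_eq_triple hx hGx (hB.1 _ hb) (hCross _ hb hnot)
  refine ⟨v 2, ?_, fun m hm => ?_⟩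
  · rwa [triple_eq, (mem_triple hx).1 hib, (mem_triple hx).1 hjb] at hb
  · have hvm := hb_unique _ ⟨hm, by simp, by simp⟩
    exact ((mem_triple hx).1 (hvm ▸ by simp)).symm

theorem filter_not_subset_eq_image_triple {L : Fin n → Fin n → Fin n}
    (hx : Injective (uncurry x)) (hGx : ∀ k p, p ∈ G k ↔ ∃ t, x k t = p)
    (hB : ∀ b ∈ B, b.card = 3) (hCross : ∀ b ∈ B, (¬∃ k, b ⊆ G k) → ∀ k, (b ∩ G k).Nonempty)
    (hL : ∀ i j m, L i j = m ↔ ({x 0 i, x 1 j, x 2 m} : Finset P) ∈ B) :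
    (B.filter fun b => ¬∃ k, b ⊆ G k) = univ.image fun c => triple x (cellCoord L c) := by
  ext b
  simp only [mem_filter, mem_image, mem_univ, true_and]
  constructor
  · rintro ⟨hb, hnot⟩
    obtain ⟨v, rfl⟩ := exists_eq_triple hx hGx (hB _ hb) (hCross _ hb hnot)
    have hLv : L (v 0) (v 1) = v 2 := (hL _ _ _).2 (triple_eq x v ▸ hb)
    refine ⟨(v 0, v 1), congrArg (triple x) (funext fun k => ?_)⟩
    fin_cases k
    exacts [rfl, rfl, hLv]
  · rintro ⟨c, rfl⟩
    refine ⟨?_, fun ⟨k, hk⟩ =>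
      not_subset_group_of_mem hx hGx ((mem_triple hx).2 rfl) ((mem_triple hx).2 rfl) k hk⟩
    rw [triple_eq]
    exact (hL _ _ _).1 rfl

end Decomposition

theorem sts27_decomposition_resolvable_general {P : Type*} [Fintype P] [DecidableEq P]
    (B : Finset (Finset P)) (hB : IsSTS B)
    (G : ZMod 3 → Finset P)
    -- the three groups partition the points and have size 9
    (hGdisj : ∀ i j, i ≠ j → Disjoint (G i) (G j))
    (hGcover : Finset.univ.biUnion G = Finset.univ)
    (hGcard : ∀ i, (G i).card = 9)
    -- the blocks inside each group form a sub-STS on that group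
    (hSub : ∀ i, IsSTSOn (G i) (B.filter fun b => b ⊆ G i))
    -- every other block meets all three groups
    (hCross : ∀ b ∈ B, (¬ ∃ i, b ⊆ G i) →
      (b ∩ G 0).Nonempty ∧ (b ∩ G 1).Nonempty ∧ (b ∩ G 2).Nonempty)
    -- the Latin square of order 9 of the transversal design has an orthogonal mate
    (hmate : ∀ (φ₀ : {p // p ∈ G 0} ≃ Fin 9) (φ₁ : {p // p ∈ G 1} ≃ Fin 9)
        (φ₂ : {p // p ∈ G 2} ≃ Fin 9) (L : Fin 9 → Fin 9 → Fin 9),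
      (∀ i j m, L i j = m ↔
        ({(φ₀.symm i : P), (φ₁.symm j : P), (φ₂.symm m : P)} : Finset P) ∈ B) →
      ∃ M, IsLatinSquare M ∧ AreOrthogonal L M) :
    IsResolvable B ∧
      ∃ F : Finpartition B, F.parts.card = 13 ∧ ∀ C ∈ F.parts, IsParallelClass C := by
  have hG : Pairwise (Disjoint on G) := hGdisj
  let φ k : {p // p ∈ G k} ≃ Fin 9 := Fintype.equivFinOfCardEq (by rw [Fintype.card_coe, hGcard])
  set x : ZMod 3 → Fin 9 → P := fun k t => (φ k).symm t
  have hx : Bijective (uncurry x) := bijective_uncurry_of_partition hG hGcover φ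
  have hGx : ∀ k p, p ∈ G k ↔ ∃ t, x k t = p := fun k p =>
    ⟨fun hp => ⟨φ k ⟨p, hp⟩, by simp [x]⟩, fun ⟨t, ht⟩ => ht ▸ ((φ k).symm t).2⟩
  have hCross' : ∀ b ∈ B, (¬∃ k, b ⊆ G k) → ∀ k, (b ∩ G k).Nonempty := fun b hb hnot k => by
    obtain ⟨h0, h1, h2⟩ := hCross b hb hnot
    fin_cases k <;> assumption
  choose L hL using existsUnique_symbol hx.1 hGx hB hCross'
  have hLiff : ∀ i j m, L i j = m ↔ ({x 0 i, x 1 j, x 2 m} : Finset P) ∈ B :=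
    fun i j m => ⟨fun h => h ▸ (hL i j).1, fun h => ((hL i j).2 m h).symm⟩
  obtain ⟨M, hM, hLM⟩ := hmate (φ 0) (φ 1) (φ 2) L hLiff
  obtain ⟨D, hD⟩ := exists_isResolutionOn_filter_subset hG hB.1 hSub hGcard
  have hcross := isResolutionOn_crossClass hx hM hLM
  rw [← filter_not_subset_eq_image_triple hx.1 hGx hB.1 hCross' hLiff] at hcross
  rw [hGcover] at hD
  have hres := hD.sum_elim hcross (disjoint_filter_filter_not B B _)
  rw [filter_union_filter_not_eq] at hres
  have : Nonempty P := ⟨x 0 0⟩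
  obtain ⟨F, hF, hFpar⟩ := hres.exists_finpartition
  exact ⟨⟨F, hFpar⟩, F, by simpa using hF, hFpar⟩

/-- Let `B` be a Steiner triple system on 27 points with a `(3,2)`-decomposition into
three groups `G 0, G 1, G 2` of size 9: the blocks inside each group form an STS on it,
every other block meets all three groups, and every pair of points from two different
groups lies in exactly one block meeting all three groups (a transversal design `TD[3;9]`
given by a Latin square of order 9).  If that Latin square has an orthogonal mate, then
`B` is resolvable; its block set is partitioned into 13 parallel classes. -/
theorem sts27_decomposition_resolvable {P : Type*} [Fintype P] [DecidableEq P]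
    (hP : Fintype.card P = 27) (B : Finset (Finset P)) (hB : IsSTS B)
    (G : ZMod 3 → Finset P)
    -- the three groups partition the points and have size 9
    (hGdisj : ∀ i j, i ≠ j → Disjoint (G i) (G j))
    (hGcover : Finset.univ.biUnion G = Finset.univ)
    (hGcard : ∀ i, (G i).card = 9)
    -- the blocks inside each group form a sub-STS on that group
    (hSub : ∀ i, IsSTSOn (G i) (B.filter fun b => b ⊆ G i))
    -- every other block meets all three groups
    (hCross : ∀ b ∈ B, (¬ ∃ i, b ⊆ G i) →
      (b ∩ G 0).Nonempty ∧ (b ∩ G 1).Nonempty ∧ (b ∩ G 2).Nonempty)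
    -- every pair of points from two different groups lies in exactly one cross block
    (hTD : ∀ i j : ZMod 3, i ≠ j → ∀ p ∈ G i, ∀ q ∈ G j,
      ∃! b, b ∈ B ∧ (b ∩ G 0).Nonempty ∧ (b ∩ G 1).Nonempty ∧ (b ∩ G 2).Nonempty ∧
        p ∈ b ∧ q ∈ b)
    -- the Latin square of order 9 of the transversal design has an orthogonal mate
    (hmate : ∀ (φ₀ : {p // p ∈ G 0} ≃ Fin 9) (φ₁ : {p // p ∈ G 1} ≃ Fin 9)
        (φ₂ : {p // p ∈ G 2} ≃ Fin 9) (L : Fin 9 → Fin 9 → Fin 9),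
      (∀ i j m, L i j = m ↔
        ({(φ₀.symm i : P), (φ₁.symm j : P), (φ₂.symm m : P)} : Finset P) ∈ B) →
      ∃ M, IsLatinSquare M ∧ AreOrthogonal L M) :
    IsResolvable B ∧
      ∃ F : Finpartition B, F.parts.card = 13 ∧ ∀ C ∈ F.parts, IsParallelClass C :=
  sts27_decomposition_resolvable_general B hB G hGdisj hGcover hGcard hSub hCross hmate
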